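/- Correctness of AHOC (Axiom 1): Fix d ≥ 1, α ∈ [0,1), and ε > 0, and for a d×d real matrix W define M(W) with entries M(W)_{ij} = α W_{ij}² + (1−α)|W_{ij}| and h_AHOC(W) = trace(exp(M(W) / (‖M(W)‖_F + ε))) − d. Then h_AHOC(W) = 0 if and only if M(W) is nilpotent (equivalently, the entrywise-absolute-value matrix |W| is nilpotent). -/

import Mathlib

open Matrix

attribute [local instance] Matrix.frobeniusNormedAddCommGroup Matrix.frobeniusNormedSpace

/-- The hybrid-order core `M(W)_{ij} = α W_{ij}² + (1−α) |W_{ij}|`. -/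
noncomputable def hybridCore {d : ℕ} (α : ℝ) (W : Matrix (Fin d) (Fin d) ℝ) :
    Matrix (Fin d) (Fin d) ℝ :=
  Matrix.of fun i j => α * (W i j) ^ 2 + (1 - α) * |W i j|

/-- The AHOC constraint `h_AHOC(W) = trace (exp (M(W) / (‖M(W)‖_F + ε))) − d`,
with `‖·‖` the Frobenius norm (local instance). -/
noncomputable def hAHOC (d : ℕ) (α ε : ℝ) (W : Matrix (Fin d) (Fin d) ℝ) : ℝ :=
  (NormedSpace.exp ((‖hybridCore α W‖ + ε)⁻¹ • hybridCore α W)).trace - d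

attribute [local instance] Matrix.frobeniusNormedRing Matrix.frobeniusNormedAlgebra

namespace AHOCaux

variable {d : ℕ}

lemma pow_entry_nonneg {A : Matrix (Fin d) (Fin d) ℝ} (hA : ∀ i j, 0 ≤ A i j) :
    ∀ (n : ℕ) (i j : Fin d), 0 ≤ (A ^ n) i j := by
  intro n
  induction n with
  | zero =>
    intro i j
    simp only [pow_zero, Matrix.one_apply]
    split <;> norm_num
  | succ n ih =>
    intro i j
    rw [pow_succ, Matrix.mul_apply]
    exact Finset.sum_nonneg fun k _ => mul_nonneg (ih i k) (hA k j)

/-- positivity of a power entry iff there is a positively-weighted walk -/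
lemma pos_iff_walk {A : Matrix (Fin d) (Fin d) ℝ} (hA : ∀ i j, 0 ≤ A i j) :
    ∀ (n : ℕ) (i j : Fin d), 0 < (A ^ n) i j ↔
      ∃ v : ℕ → Fin d, v 0 = i ∧ v n = j ∧ ∀ t < n, 0 < A (v t) (v (t + 1)) := by
  intro n
  induction n with
  | zero =>
    intro i j
    constructor
    · intro h
      have hij : i = j := by
        by_contra hne
        simp [pow_zero, Matrix.one_apply, hne] at h
      exact ⟨fun _ => i, rfl, hij, fun t ht => absurd ht (by omega)⟩
    · rintro ⟨v, h0, hn, -⟩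
      have : i = j := h0 ▸ hn
      simp [pow_zero, Matrix.one_apply, this]
  | succ n ih =>
    intro i j
    constructor
    · intro h
      rw [pow_succ, Matrix.mul_apply] at h
      obtain ⟨k, -, hk⟩ : ∃ k ∈ Finset.univ, 0 < (A ^ n) i k * A k j := by
        by_contra hc
        push_neg at hc
        have : (∑ k, (A ^ n) i k * A k j) ≤ 0 :=
          Finset.sum_nonpos fun k hk => hc k hk
        linarith
      have h1 : 0 < (A ^ n) i k := by
        rcases lt_or_eq_of_le (pow_entry_nonneg hA n i k) with h' | h'
        · exact h'
        · rw [← h'] at hk; simpa using hk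
      have h2 : 0 < A k j := by
        rcases lt_or_eq_of_le (hA k j) with h' | h'
        · exact h'
        · rw [← h'] at hk; simpa using hk
      obtain ⟨v, hv0, hvn, hvs⟩ := (ih i k).1 h1
      refine ⟨fun t => if t ≤ n then v t else j, by simpa using hv0, by simp, ?_⟩
      intro t ht
      show 0 < A (if t ≤ n then v t else j) (if t + 1 ≤ n then v (t + 1) else j)
      rcases Nat.lt_or_ge t n with h' | h'
      · rw [if_pos h'.le, if_pos (by omega : t + 1 ≤ n)]
        exact hvs t h'
      · have htn : t = n := by omega
        rw [if_pos (by omega : t ≤ n), if_neg (by omega : ¬ t + 1 ≤ n), htn, hvn]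
        exact h2
    · rintro ⟨v, hv0, hvn, hvs⟩
      have h1 : 0 < (A ^ n) i (v n) :=
        (ih i (v n)).2 ⟨v, hv0, rfl, fun t ht => hvs t (by omega)⟩
      have h2 : 0 < A (v n) j := by
        have := hvs n (by omega)
        rwa [hvn] at this
      rw [pow_succ, Matrix.mul_apply]
      have hle : (A ^ n) i (v n) * A (v n) j ≤ ∑ k, (A ^ n) i k * A k j :=
        Finset.single_le_sum
          (fun k _ => mul_nonneg (pow_entry_nonneg hA n i k) (hA k j))
          (Finset.mem_univ (v n))
      exact lt_of_lt_of_le (mul_pos h1 h2) hle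

/-- a cycle: a positive diagonal entry of a positive power -/
def Cyc (A : Matrix (Fin d) (Fin d) ℝ) : Prop :=
  ∃ (n : ℕ) (i : Fin d), 0 < n ∧ 0 < (A ^ n) i i

lemma cyc_pump {A : Matrix (Fin d) (Fin d) ℝ} (hA : ∀ i j, 0 ≤ A i j)
    {n : ℕ} {i : Fin d} (h : 0 < (A ^ n) i i) :
    ∀ k : ℕ, 0 < (A ^ ((k + 1) * n)) i i := by
  intro k
  induction k with
  | zero => simpa using h
  | succ k ih =>
    have : (k + 1 + 1) * n = (k + 1) * n + n := by ring
    rw [this, pow_add, Matrix.mul_apply]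
    have hle : (A ^ ((k + 1) * n)) i i * (A ^ n) i i ≤
        ∑ l, (A ^ ((k + 1) * n)) i l * (A ^ n) l i :=
      Finset.single_le_sum
        (fun l _ => mul_nonneg (pow_entry_nonneg hA _ i l) (pow_entry_nonneg hA n l i))
        (Finset.mem_univ i)
    exact lt_of_lt_of_le (mul_pos ih h) hle

lemma nilpotent_iff_not_cyc {A : Matrix (Fin d) (Fin d) ℝ} (hA : ∀ i j, 0 ≤ A i j) :
    IsNilpotent A ↔ ¬ Cyc A := by
  constructor
  · rintro ⟨m, hm⟩ ⟨n, i, hn, hpos⟩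
    have h1 : 0 < (A ^ ((m + 1) * n)) i i := cyc_pump hA hpos m
    have h2 : A ^ ((m + 1) * n) = 0 := by
      have : m ≤ (m + 1) * n := by nlinarith
      calc A ^ ((m + 1) * n) = A ^ m * A ^ ((m + 1) * n - m) := by
            rw [← pow_add]; congr 1; omega
        _ = 0 := by rw [hm, zero_mul]
    rw [h2] at h1
    simpa using h1
  · intro hnc
    refine ⟨d, ?_⟩
    ext i j
    simp only [Matrix.zero_apply]
    by_contra hne
    have hpos : 0 < (A ^ d) i j :=
      lt_of_le_of_ne (pow_entry_nonneg hA d i j) (Ne.symm hne)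
    obtain ⟨v, hv0, hvn, hvs⟩ := (pos_iff_walk hA d i j).1 hpos
    -- pigeonhole on v restricted to {0, ..., d}
    obtain ⟨x, y, hxy, hvxy⟩ :
        ∃ x y : Fin (d + 1), x ≠ y ∧ v x.val = v y.val := by
      have hcard : Fintype.card (Fin d) < Fintype.card (Fin (d + 1)) := by simp
      obtain ⟨x, y, hxy, h⟩ :=
        Fintype.exists_ne_map_eq_of_card_lt (fun t : Fin (d + 1) => v t.val) hcard
      exact ⟨x, y, hxy, h⟩
    -- wlog x < y
    obtain ⟨a, b, hab, hbd, hva⟩ :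
        ∃ a b : ℕ, a < b ∧ b ≤ d ∧ v a = v b := by
      rcases lt_or_gt_of_ne hxy with h | h
      · exact ⟨x.val, y.val, h, by omega, hvxy⟩
      · exact ⟨y.val, x.val, h, by omega, hvxy.symm⟩
    apply hnc
    refine ⟨b - a, v a, by omega, ?_⟩
    refine (pos_iff_walk hA (b - a) (v a) (v a)).2
      ⟨fun t => v (a + t), by simp, ?_, ?_⟩
    · show v (a + (b - a)) = v a
      rw [show a + (b - a) = b by omega]; exact hva.symm
    · intro t ht
      show 0 < A (v (a + t)) (v (a + (t + 1)))
      rw [show a + (t + 1) = a + t + 1 by ring]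
      exact hvs (a + t) (by omega)

lemma cyc_congr {A B : Matrix (Fin d) (Fin d) ℝ} (hA : ∀ i j, 0 ≤ A i j)
    (hB : ∀ i j, 0 ≤ B i j) (h : ∀ i j, A i j = 0 ↔ B i j = 0) :
    Cyc A ↔ Cyc B := by
  have key : ∀ i j, 0 < A i j ↔ 0 < B i j := by
    intro i j
    constructor
    · intro hpos
      exact lt_of_le_of_ne (hB i j) fun he => (by rw [← (h i j).2 he.symm] at hpos; exact lt_irrefl _ hpos)
    · intro hpos
      exact lt_of_le_of_ne (hA i j) fun he => (by rw [(h i j).1 he.symm] at hpos; exact lt_irrefl _ hpos)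
  constructor
  · rintro ⟨n, i, hn, hpos⟩
    obtain ⟨v, hv0, hvn, hvs⟩ := (pos_iff_walk hA n i i).1 hpos
    exact ⟨n, i, hn, (pos_iff_walk hB n i i).2
      ⟨v, hv0, hvn, fun t ht => (key _ _).1 (hvs t ht)⟩⟩
  · rintro ⟨n, i, hn, hpos⟩
    obtain ⟨v, hv0, hvn, hvs⟩ := (pos_iff_walk hB n i i).1 hpos
    exact ⟨n, i, hn, (pos_iff_walk hA n i i).2
      ⟨v, hv0, hvn, fun t ht => (key _ _).2 (hvs t ht)⟩⟩

lemma nilpotent_congr {A B : Matrix (Fin d) (Fin d) ℝ} (hA : ∀ i j, 0 ≤ A i j)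
    (hB : ∀ i j, 0 ≤ B i j) (h : ∀ i j, A i j = 0 ↔ B i j = 0) :
    IsNilpotent A ↔ IsNilpotent B := by
  rw [nilpotent_iff_not_cyc hA, nilpotent_iff_not_cyc hB, cyc_congr hA hB h]

lemma trace_char {A : Matrix (Fin d) (Fin d) ℝ} (hA : ∀ i j, 0 ≤ A i j) :
    (∀ n : ℕ, 1 ≤ n → (A ^ n).trace = 0) ↔ IsNilpotent A := by
  constructor
  · intro h
    rw [nilpotent_iff_not_cyc hA]
    rintro ⟨n, i, hn, hpos⟩
    have h1 : (A ^ n) i i ≤ (A ^ n).trace := by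
      rw [Matrix.trace]
      exact Finset.single_le_sum (fun l _ => pow_entry_nonneg hA n l l) (Finset.mem_univ i)
    rw [h n hn] at h1
    linarith
  · rintro ⟨m, hm⟩ n hn
    have : IsNilpotent (A ^ n) := ⟨m, by rw [← pow_mul, mul_comm, pow_mul, hm, zero_pow (by omega)]⟩
    have := Matrix.isNilpotent_trace_of_isNilpotent this
    exact this.eq_zero

end AHOCaux

open AHOCaux in
/-- Correctness of AHOC, Axiom 1: for `d ≥ 1`, `α ∈ [0,1)` and `ε > 0`,
`h_AHOC(W) = 0` iff `M(W)` is nilpotent, equivalently iff the entrywise absolute value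
matrix `|W|` is nilpotent. -/
theorem stmt_6 (d : ℕ) (hd : 1 ≤ d) (α : ℝ) (hα0 : 0 ≤ α) (hα1 : α < 1)
    (ε : ℝ) (hε : 0 < ε) (W : Matrix (Fin d) (Fin d) ℝ) :
    (hAHOC d α ε W = 0 ↔ IsNilpotent (hybridCore α W)) ∧
    (IsNilpotent (hybridCore α W) ↔ IsNilpotent (Matrix.of fun i j => |W i j|)) := by
  set M := hybridCore α W with hM
  have hMnn : ∀ i j, 0 ≤ M i j := by
    intro i j
    simp only [hM, hybridCore, Matrix.of_apply]
    have := sq_nonneg (W i j)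
    have := abs_nonneg (W i j)
    nlinarith
  have hMzero : ∀ i j, M i j = 0 ↔ W i j = 0 := by
    intro i j
    simp only [hM, hybridCore, Matrix.of_apply]
    constructor
    · intro h
      by_contra hne
      have h1 : 0 < |W i j| := abs_pos.2 hne
      have h2 : 0 ≤ α * (W i j) ^ 2 := mul_nonneg hα0 (sq_nonneg _)
      nlinarith
    · intro h; simp [h]
  set c : ℝ := (‖M‖ + ε)⁻¹ with hc
  have hcpos : 0 < c := by
    have : (0 : ℝ) ≤ ‖M‖ := norm_nonneg _
    positivity
  set A : Matrix (Fin d) (Fin d) ℝ := c • M with hA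
  have hAnn : ∀ i j, 0 ≤ A i j := fun i j =>
    mul_nonneg hcpos.le (hMnn i j)
  have hAzero : ∀ i j, A i j = 0 ↔ M i j = 0 := by
    intro i j
    simp only [hA, Matrix.smul_apply, smul_eq_mul]
    constructor
    · intro h
      rcases mul_eq_zero.1 h with h | h
      · exact absurd h hcpos.ne'
      · exact h
    · intro h; rw [h, mul_zero]
  -- trace of exp as a sum
  have hsum : Summable fun n : ℕ => ((n.factorial : ℝ))⁻¹ • A ^ n :=
    NormedSpace.expSeries_summable' (𝕂 := ℝ) A
  have htr : (NormedSpace.exp A).trace = ∑' n : ℕ, ((n.factorial : ℝ))⁻¹ * (A ^ n).trace := by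
    rw [NormedSpace.exp_eq_tsum (𝕂 := ℝ)]
    have := hsum.hasSum.mapL
      (LinearMap.toContinuousLinearMap (Matrix.traceLinearMap (Fin d) ℝ ℝ))
    simp only [ContinuousLinearMap.coe_coe, LinearMap.coe_toContinuousLinearMap',
      Matrix.traceLinearMap_apply] at this
    rw [this.tsum_eq.symm]
    congr 1
    ext n
    rw [Matrix.trace_smul, smul_eq_mul]
  set f : ℕ → ℝ := fun n => ((n.factorial : ℝ))⁻¹ * (A ^ n).trace with hf
  have hfsum : Summable f := by
    have := hsum.hasSum.mapL
      (LinearMap.toContinuousLinearMap (Matrix.traceLinearMap (Fin d) ℝ ℝ))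
    simp only [ContinuousLinearMap.coe_coe, LinearMap.coe_toContinuousLinearMap',
      Matrix.traceLinearMap_apply] at this
    refine this.summable.congr fun n => ?_
    rw [Matrix.trace_smul, smul_eq_mul]
  have hf0 : f 0 = d := by
    simp [hf, Matrix.trace_one]
  have hfnn : ∀ n : ℕ, 1 ≤ n → 0 ≤ f n := by
    intro n hn
    apply mul_nonneg (by positivity)
    rw [Matrix.trace]
    exact Finset.sum_nonneg fun i _ => pow_entry_nonneg hAnn n i i
  have hAHOCval : hAHOC d α ε W = ∑' n : ℕ, f (n + 1) := by
    rw [hAHOC, ← hM, ← hc, ← hA, htr]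
    rw [Summable.tsum_eq_zero_add hfsum, hf0]
    ring
  have step1 : hAHOC d α ε W = 0 ↔ ∀ n : ℕ, 1 ≤ n → (A ^ n).trace = 0 := by
    rw [hAHOCval]
    constructor
    · intro h n hn
      have hsum' : Summable fun n => f (n + 1) := by
        exact (summable_nat_add_iff 1).2 hfsum
      have hle : f n ≤ ∑' m : ℕ, f (m + 1) := by
        obtain ⟨m, rfl⟩ : ∃ m, n = m + 1 := ⟨n - 1, by omega⟩
        exact Summable.le_tsum hsum' m fun j _ => hfnn (j + 1) (by omega)
      rw [h] at hle
      have hge := hfnn n hn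
      have hfn0 : f n = 0 := le_antisymm hle hge
      have : ((n.factorial : ℝ))⁻¹ ≠ 0 := by positivity
      rw [hf] at hfn0
      exact (mul_eq_zero.1 hfn0).resolve_left this
    · intro h
      have : ∀ n : ℕ, f (n + 1) = 0 := by
        intro n
        rw [hf]
        simp [h (n + 1) (by omega)]
      simp [this]
  have step2 : (∀ n : ℕ, 1 ≤ n → (A ^ n).trace = 0) ↔ IsNilpotent A := trace_char hAnn
  have step3 : IsNilpotent A ↔ IsNilpotent M :=
    nilpotent_congr hAnn hMnn hAzero
  have habs : ∀ i j, (0:ℝ) ≤ (Matrix.of fun i j => |W i j|) i j := fun i j => abs_nonneg _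
  have step4 : IsNilpotent M ↔ IsNilpotent (Matrix.of fun i j => |W i j|) := by
    apply nilpotent_congr hMnn habs
    intro i j
    rw [hMzero i j]
    simp [abs_eq_zero]
  exact ⟨step1.trans (step2.trans step3), step4⟩
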